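/- Let λ ∈ ℝ^n with λ_i > 0 for i ∈ [r] and λ_i = 0 for i > r, and ĝ(u) = ‖u⊗u⊗u − diag₃(λ)‖_F². Suppose û ≠ 0 is a critical point of ĝ whose support J = {i : û_i ≠ 0} has |J| ≥ 2. Then the Hessian ∇²ĝ(û) has a negative eigenvalue; in fact λ_min(∇²ĝ(û)) ≤ −6‖û‖₂⁴ < 0. -/

import Mathlib

open Finset

variable {n : ℕ}

/-- `ĝ(u) = ‖u ⊗ u ⊗ u − diag₃(λ)‖_F²`. -/
noncomputable def ghat {n : ℕ} (lam : Fin n → ℝ) (u : EuclideanSpace ℝ (Fin n)) : ℝ :=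
  ∑ i, ∑ j, ∑ k, (u i * u j * u k - if i = j ∧ j = k then lam i else 0) ^ 2

lemma double_ite (c : ℝ) (i : Fin n) :
    ∑ j : Fin n, ∑ k : Fin n, (if i = j ∧ j = k then c else 0) = c := by
  have h : ∀ j k : Fin n, (if i = j ∧ j = k then c else 0)
      = if j = i then (if k = j then c else 0) else 0 := by
    intro j k
    by_cases h1 : j = i <;> by_cases h2 : k = j <;> simp_all <;> tauto
  simp [h, Finset.sum_ite_eq']

lemma ghat_eq (lam : Fin n → ℝ) (u : EuclideanSpace ℝ (Fin n)) :
    ghat lam u = (∑ i, u i ^ 2) ^ 3 - 2 * ∑ i, lam i * u i ^ 3 + ∑ i, lam i ^ 2 := by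
  have expand : ∀ i j k : Fin n,
      (u i * u j * u k - (if i = j ∧ j = k then lam i else 0)) ^ 2
        = u i ^ 2 * u j ^ 2 * u k ^ 2
          - 2 * (if i = j ∧ j = k then lam i * u i ^ 3 else 0)
          + (if i = j ∧ j = k then lam i ^ 2 else 0) := by
    intro i j k
    split_ifs with h
    · obtain ⟨h1, h2⟩ := h; subst h1; subst h2; ring
    · ring
  unfold ghat
  simp only [expand, Finset.sum_add_distrib, Finset.sum_sub_distrib, ← Finset.mul_sum,
    double_ite]
  have h1 : (∑ i, u i ^ 2) ^ 3 = ∑ i, ∑ j, ∑ k, u i ^ 2 * u j ^ 2 * u k ^ 2 := by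
    rw [show (3:ℕ) = 2 + 1 from rfl, pow_succ, pow_two, Finset.sum_mul_sum]
    rw [Finset.sum_mul]
    refine Finset.sum_congr rfl fun i _ => ?_
    rw [Finset.sum_mul]
    refine Finset.sum_congr rfl fun j _ => ?_
    rw [Finset.mul_sum]
  rw [h1]
  simp only [Finset.mul_sum]

noncomputable def D1 (lam : Fin n → ℝ) (x : EuclideanSpace ℝ (Fin n)) :
    EuclideanSpace ℝ (Fin n) →L[ℝ] ℝ :=
  ∑ i, (6 * (∑ j, x j ^ 2) ^ 2 * x i - 6 * lam i * x i ^ 2) • EuclideanSpace.proj i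

lemma hproj (x : EuclideanSpace ℝ (Fin n)) (i : Fin n) :
    HasFDerivAt (𝕜 := ℝ) (fun u : EuclideanSpace ℝ (Fin n) => u i) (EuclideanSpace.proj i) x :=
  (EuclideanSpace.proj i : EuclideanSpace ℝ (Fin n) →L[ℝ] ℝ).hasFDerivAt

lemma hs (x : EuclideanSpace ℝ (Fin n)) :
    HasFDerivAt (𝕜 := ℝ) (fun u : EuclideanSpace ℝ (Fin n) => ∑ i, u i ^ 2)
      (∑ i, (((2:ℕ):ℝ) * x i ^ 1) • EuclideanSpace.proj i) x :=
  HasFDerivAt.fun_sum fun i _ => ((hasDerivAt_pow 2 (x i)).comp_hasFDerivAt x (hproj x i) :)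

lemma hasFDerivAt_ghat (lam : Fin n → ℝ) (x : EuclideanSpace ℝ (Fin n)) :
    HasFDerivAt (ghat lam) (D1 lam x) x := by
  have hg : ghat lam
      = fun u => (∑ i, u i ^ 2) ^ 3 - 2 * ∑ i, lam i * u i ^ 3 + ∑ i, lam i ^ 2 :=
    funext (ghat_eq lam)
  rw [hg]
  have hc : HasFDerivAt (𝕜 := ℝ) (fun u : EuclideanSpace ℝ (Fin n) => ∑ i, lam i * u i ^ 3)
      (∑ i, lam i • ((((3:ℕ):ℝ) * x i ^ 2) • EuclideanSpace.proj i)) x :=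
    HasFDerivAt.fun_sum fun i _ =>
      ((((hasDerivAt_pow 3 (x i)).comp_hasFDerivAt x (hproj x i)).const_mul (lam i) :))
  have hf := (((hasDerivAt_pow 3 (∑ i, x i ^ 2)).comp_hasFDerivAt x (hs x)).sub
      (hc.const_mul 2)).add_const (∑ i, lam i ^ 2)
  refine HasFDerivAt.congr_fderiv hf (Eq.symm ?_)
  refine ContinuousLinearMap.ext fun d => ?_
  simp only [D1, ContinuousLinearMap.sum_apply, ContinuousLinearMap.smul_apply,
    ContinuousLinearMap.sub_apply, smul_eq_mul, PiLp.proj_apply,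
    Finset.mul_sum, ← Finset.sum_sub_distrib]
  refine Finset.sum_congr rfl fun i _ => ?_
  ring


noncomputable def D2 (lam : Fin n → ℝ) (x : EuclideanSpace ℝ (Fin n)) :
    EuclideanSpace ℝ (Fin n) →L[ℝ] (EuclideanSpace ℝ (Fin n) →L[ℝ] ℝ) :=
  ∑ i, ((24 * x i * ∑ j, x j ^ 2) •
        (∑ j, x j • (EuclideanSpace.proj j : EuclideanSpace ℝ (Fin n) →L[ℝ] ℝ))
      + (6 * (∑ j, x j ^ 2) ^ 2 - 12 * lam i * x i) •
        (EuclideanSpace.proj i : EuclideanSpace ℝ (Fin n) →L[ℝ] ℝ)).smulRight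
      (EuclideanSpace.proj i)

lemma hasFDerivAt_D1 (lam : Fin n → ℝ) (x : EuclideanSpace ℝ (Fin n)) :
    HasFDerivAt (fun y => D1 lam y) (D2 lam x) x := by
  have h := HasFDerivAt.fun_sum (u := (Finset.univ : Finset (Fin n))) (fun i _ =>
    (((((hasDerivAt_pow 2 (∑ j, x j ^ 2)).comp_hasFDerivAt x (hs x)).mul (hproj x i)).const_mul
        (6:ℝ)).sub (((hasDerivAt_pow 2 (x i)).comp_hasFDerivAt x (hproj x i)).const_mul
        (6 * lam i))).smul_const (EuclideanSpace.proj i : EuclideanSpace ℝ (Fin n) →L[ℝ] ℝ))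
  have hfun : (fun y : EuclideanSpace ℝ (Fin n) => D1 lam y)
      = (fun y => ∑ i, (6 * ((∑ j, y j ^ 2) ^ 2 * y i) - 6 * lam i * y i ^ 2) •
          (EuclideanSpace.proj i : EuclideanSpace ℝ (Fin n) →L[ℝ] ℝ)) := by
    funext y
    exact Finset.sum_congr rfl fun i _ => by rw [mul_assoc]
  rw [hfun]
  refine HasFDerivAt.congr_fderiv h (Eq.symm ?_)
  refine ContinuousLinearMap.ext fun d => ?_
  refine ContinuousLinearMap.ext fun e => ?_
  have hB : ∑ j, ((2:ℕ):ℝ) * x j ^ 1 * d j = 2 * ∑ j, x j * d j := by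
    rw [Finset.mul_sum]; exact Finset.sum_congr rfl fun j _ => by ring
  simp only [D2, ContinuousLinearMap.sum_apply, ContinuousLinearMap.add_apply,
    ContinuousLinearMap.smul_apply, ContinuousLinearMap.smulRight_apply,
    ContinuousLinearMap.sub_apply, smul_eq_mul, PiLp.proj_apply]
  refine Finset.sum_congr rfl fun i _ => ?_
  simp only [ContinuousLinearMap.sum_apply, ContinuousLinearMap.smul_apply,
    PiLp.proj_apply, smul_eq_mul, hB, Function.comp_apply, Function.comp]
  ring

lemma sum_pair_support {a b : Fin n} (hab : a ≠ b) (f : Fin n → ℝ)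
    (h : ∀ i, i ≠ a → i ≠ b → f i = 0) : ∑ i, f i = f a + f b := by
  classical
  rw [show (Finset.univ : Finset (Fin n)) = insert a (insert b (Finset.univ \ {a, b})) from ?_]
  · rw [Finset.sum_insert, Finset.sum_insert]
    · rw [Finset.sum_eq_zero fun i hi => ?_]
      · ring
      · simp only [Finset.mem_sdiff, Finset.mem_insert, Finset.mem_singleton] at hi
        exact h i (fun h' => hi.2 (Or.inl h')) (fun h' => hi.2 (Or.inr h'))
    · simp
    · simp [hab]
  · ext i
    by_cases h1 : i = a <;> by_cases h2 : i = b <;> simp [h1, h2]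

set_option linter.unusedVariables false in
/-- If `û ≠ 0` is a critical point of `ĝ` whose support has at least two elements,
then the Hessian of `ĝ` at `û` has a negative eigenvalue; in fact
`λ_min(∇²ĝ(û)) ≤ −6‖û‖₂⁴ < 0`. -/
theorem ghat_saddle_has_negative_curvature {n r : ℕ} (lam : Fin n → ℝ)
    (hlam : ∀ i : Fin n, ((i : ℕ) < r → 0 < lam i) ∧ (r ≤ (i : ℕ) → lam i = 0))
    (uhat : EuclideanSpace ℝ (Fin n)) (hu0 : uhat ≠ 0)
    (hcrit : HasGradientAt (ghat lam) 0 uhat)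
    (hsupp : 2 ≤ Set.ncard {i : Fin n | uhat i ≠ 0}) :
    ∃ d : EuclideanSpace ℝ (Fin n), ‖d‖ = 1 ∧
      iteratedFDeriv ℝ 2 (ghat lam) uhat ![d, d] ≤ -6 * ‖uhat‖ ^ 4 ∧
      -6 * ‖uhat‖ ^ 4 < 0 := by
  classical
  -- two support elements
  obtain ⟨a, ha, b, hb, hab⟩ :=
    (Set.one_lt_ncard (Set.toFinite _)).mp (lt_of_lt_of_le one_lt_two hsupp)
  simp only [Set.mem_setOf_eq] at ha hb
  set s : ℝ := ∑ i, uhat i ^ 2 with hs_def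
  have hs_pos : 0 < s := by
    have : 0 < uhat a ^ 2 := lt_of_le_of_ne (sq_nonneg _) (Ne.symm (pow_ne_zero 2 ha))
    calc (0:ℝ) < uhat a ^ 2 := this
    _ ≤ s := Finset.single_le_sum (f := fun i => uhat i ^ 2) (fun i _ => by positivity)
        (Finset.mem_univ a)
  -- criticality
  have hD1zero : D1 lam uhat = 0 := by
    have h1 : HasFDerivAt (ghat lam) ((InnerProductSpace.toDual ℝ _) 0) uhat :=
      hcrit.hasFDerivAt
    rw [map_zero] at h1
    exact (hasFDerivAt_ghat lam uhat).unique h1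
  have hkey : ∀ i : Fin n, 6 * s ^ 2 * uhat i - 6 * lam i * uhat i ^ 2 = 0 := by
    intro i
    have := congrArg (fun L : EuclideanSpace ℝ (Fin n) →L[ℝ] ℝ =>
      L (EuclideanSpace.single i 1)) hD1zero
    simp only [D1, ContinuousLinearMap.sum_apply, ContinuousLinearMap.smul_apply,
      PiLp.proj_apply, smul_eq_mul, EuclideanSpace.single_apply,
      ContinuousLinearMap.zero_apply] at this
    simpa [Finset.sum_ite_eq'] using this
  have hlamu : ∀ i : Fin n, uhat i ≠ 0 → lam i * uhat i = s ^ 2 := by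
    intro i hi
    have h := hkey i
    have : uhat i * (6 * s ^ 2) = uhat i * (6 * (lam i * uhat i)) := by ring_nf; ring_nf at h; linarith
    have := mul_left_cancel₀ hi this
    linarith
  -- the direction
  set w : EuclideanSpace ℝ (Fin n) :=
    EuclideanSpace.single a (uhat b) - EuclideanSpace.single b (uhat a) with hw_def
  have hwv : ∀ i, w i = (if i = a then uhat b else 0) - (if i = b then uhat a else 0) := by
    intro i
    simp [hw_def, EuclideanSpace.single_apply]
  have hwa : w a = uhat b := by simp [hwv, hab]
  have hwb : w b = -uhat a := by simp [hwv, Ne.symm hab]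
  have hw0 : ∀ i, i ≠ a → i ≠ b → w i = 0 := by intro i h1 h2; simp [hwv, h1, h2]
  set c : ℝ := uhat b ^ 2 + uhat a ^ 2 with hc_def
  have hc_pos : 0 < c :=
    add_pos_of_nonneg_of_pos (sq_nonneg _) (lt_of_le_of_ne (sq_nonneg _) (Ne.symm (pow_ne_zero 2 ha)))
  have hnw : ‖w‖ = Real.sqrt c := by
    rw [EuclideanSpace.norm_eq]
    congr 1
    rw [sum_pair_support hab _ (fun i h1 h2 => by simp [hw0 i h1 h2])]
    rw [hwa, hwb]
    simp [Real.norm_eq_abs, sq_abs]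
    rw [hc_def]
  have hnw_pos : 0 < ‖w‖ := by rw [hnw]; exact Real.sqrt_pos.mpr hc_pos
  set t : ℝ := ‖w‖⁻¹ with ht_def
  set d : EuclideanSpace ℝ (Fin n) := t • w with hd_def
  have hdv : ∀ i, d i = t * w i := fun i => rfl
  have hnd : ‖d‖ = 1 := by
    rw [hd_def, norm_smul, ht_def, norm_inv, norm_norm, inv_mul_cancel₀ (ne_of_gt hnw_pos)]
  have ht2 : t ^ 2 * c = 1 := by
    rw [ht_def, hnw]
    rw [← Real.sqrt_inv]
    rw [Real.sq_sqrt (by positivity)]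
    field_simp
  -- sums involving d
  have hxd : ∑ j, uhat j * d j = 0 := by
    rw [sum_pair_support hab _ (fun i h1 h2 => by simp [hdv, hw0 i h1 h2])]
    simp [hdv, hwa, hwb]; ring
  have hdd : ∑ i, d i ^ 2 = 1 := by
    rw [sum_pair_support hab _ (fun i h1 h2 => by simp [hdv, hw0 i h1 h2])]
    simp only [hdv, hwa, hwb]
    rw [← ht2, hc_def]; ring
  have hld : ∑ i, lam i * uhat i * d i ^ 2 = s ^ 2 := by
    rw [sum_pair_support hab _ (fun i h1 h2 => by simp [hdv, hw0 i h1 h2])]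
    rw [show ∀ i, lam i * uhat i * d i ^ 2 = lam i * uhat i * d i ^ 2 from fun _ => rfl]
    have h1 := hlamu a ha
    have h2 := hlamu b hb
    have := ht2
    simp only [hdv, hwa, hwb]
    rw [show lam a * uhat a * (t * uhat b) ^ 2 + lam b * uhat b * (t * -uhat a) ^ 2
        = (lam a * uhat a) * (t ^ 2 * uhat b ^ 2) + (lam b * uhat b) * (t ^ 2 * uhat a ^ 2)
        from by ring, h1, h2]
    calc s ^ 2 * (t ^ 2 * uhat b ^ 2) + s ^ 2 * (t ^ 2 * uhat a ^ 2)
        = s ^ 2 * (t ^ 2 * c) := by rw [hc_def]; ring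
      _ = s ^ 2 := by rw [ht2, mul_one]
  -- the Hessian value
  have hiter : iteratedFDeriv ℝ 2 (ghat lam) uhat ![d, d] = D2 lam uhat d d := by
    rw [iteratedFDeriv_two_apply]
    have hF : fderiv ℝ (ghat lam) = fun y => D1 lam y :=
      funext fun y => (hasFDerivAt_ghat lam y).fderiv
    rw [hF, (hasFDerivAt_D1 lam uhat).fderiv]
    simp
  have hQ : D2 lam uhat d d = -6 * s ^ 2 := by
    simp only [D2, ContinuousLinearMap.sum_apply, ContinuousLinearMap.smulRight_apply,
      ContinuousLinearMap.add_apply, ContinuousLinearMap.smul_apply, PiLp.proj_apply,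
      smul_eq_mul]
    have hterm : ∀ i : Fin n, ((24 * uhat i * ∑ j, uhat j ^ 2) * ∑ j, uhat j * d j +
        (6 * (∑ j, uhat j ^ 2) ^ 2 - 12 * lam i * uhat i) * d i) * d i
        = 6 * s ^ 2 * d i ^ 2 - 12 * (lam i * uhat i * d i ^ 2) := by
      intro i; rw [hxd, ← hs_def]; ring
    rw [Finset.sum_congr rfl fun i _ => hterm i, Finset.sum_sub_distrib, ← Finset.mul_sum,
      ← Finset.mul_sum, hdd, hld]
    ring
  have hnorm2 : ‖uhat‖ ^ 2 = s := by
    rw [EuclideanSpace.norm_eq, Real.sq_sqrt (by positivity), hs_def]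
    exact Finset.sum_congr rfl fun i _ => by rw [Real.norm_eq_abs, sq_abs]
  have hnorm4 : ‖uhat‖ ^ 4 = s ^ 2 := by
    rw [show (4:ℕ) = 2 * 2 from rfl, pow_mul, hnorm2]
  refine ⟨d, hnd, ?_, ?_⟩
  · rw [hiter, hQ, hnorm4]
  · rw [hnorm4]
    have h2 : 0 < s ^ 2 := pow_pos hs_pos 2
    linarith
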